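/- Let A be a self-adjoint operator (symmetric matrix) on ℝⁿ with eigenvalues μ = (μ₁,...,μₙ) and μ₀ ∈ ℝ. Then trace(A ∘ T_k^∞(μ₀, A)) = (k+1) σ_{k+1}^∞(μ₀, μ) − μ₀ σ_k^∞(μ₀, μ). -/

import Mathlib

/-- The `k`-th elementary symmetric polynomial of `μ : Fin n → ℝ`. -/
noncomputable def esymm {n : ℕ} (k : ℕ) (μ : Fin n → ℝ) : ℝ :=
  ∑ s ∈ Finset.powersetCard k (Finset.univ : Finset (Fin n)), ∏ i ∈ s, μ i

/-- The weighted elementary symmetric function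
`σ_k^∞(μ₀, μ) = ∑_{j=0}^k (μ₀^j / j!) σ_{k-j}(μ)`. -/
noncomputable def esymmInf {n : ℕ} (k : ℕ) (μ0 : ℝ) (μ : Fin n → ℝ) : ℝ :=
  ∑ j ∈ Finset.range (k + 1), μ0 ^ j / (Nat.factorial j) * esymm (k - j) μ

/-- The weighted Newton transformations: `T₀^∞ = I` and
`T_k^∞(μ₀, A) = σ_k^∞(μ₀, μ) I − A T_{k-1}^∞(μ₀, A)`, where `μ` are the eigenvalues of `A`. -/
noncomputable def newtonInf {n : ℕ} (μ0 : ℝ) (μ : Fin n → ℝ)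
    (A : Matrix (Fin n) (Fin n) ℝ) : ℕ → Matrix (Fin n) (Fin n) ℝ
  | 0 => 1
  | (k + 1) => esymmInf (k + 1) μ0 μ • (1 : Matrix (Fin n) (Fin n) ℝ) - A * newtonInf μ0 μ A k


/-!
Expanding the recursion gives `T_k^∞ = ∑_{i+j=k} (-1)^i σ_j^∞ A^i`, so the trace in question is
`∑_{i+j=k} (-1)^i p_{i+1}(μ) σ_j^∞`, with `p_r` the power sums. The generating series
`S(t) = e^{μ₀ t} ∏ (1 + μ_i t) = ∑ σ_k^∞ t^k` has logarithmic derivative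
`μ₀ + ∑_i μ_i / (1 + μ_i t) = μ₀ + ∑_i (-1)^i p_{i+1} t^i` (Newton's identities), and comparing
the coefficients of `t^k` in `S' = (μ₀ + P) S` gives the formula.
-/

open Finset Matrix PowerSeries

theorem PowerSeries.derivative_rescale {R : Type*} [CommRing R] (a : R) (f : R⟦X⟧) :
    d⁄dX R (rescale a f) = C a * rescale a (d⁄dX R f) := by
  ext n
  simp only [coeff_derivative, coeff_rescale, coeff_C_mul, pow_succ]
  ring

theorem esymm_eq_eval {n : ℕ} (k : ℕ) (μ : Fin n → ℝ) :
    esymm k μ = MvPolynomial.eval μ (MvPolynomial.esymm (Fin n) ℝ k) := by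
  simp [MvPolynomial.esymm, esymm]

theorem sum_antidiagonal_neg_one_pow_mul_sum_pow_mul_esymm {n : ℕ} (m : ℕ) (μ : Fin n → ℝ) :
    ∑ p ∈ antidiagonal m, (-1) ^ p.1 * (∑ x, μ x ^ (p.1 + 1)) * esymm p.2 μ
      = (m + 1) * esymm (m + 1) μ := by
  have newton := congrArg (MvPolynomial.eval μ) (MvPolynomial.mul_esymm_eq_sum (Fin n) ℝ (m + 1))
  simp only [map_mul, map_sum, map_pow, map_neg, map_one, map_add, map_natCast, ← esymm_eq_eval,
    MvPolynomial.psum, Nat.cast_add_one, MvPolynomial.eval_X] at newton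
  rw [newton, sum_filter, Nat.sum_antidiagonal_succ', if_neg (lt_irrefl _), zero_add,
    ← Nat.sum_antidiagonal_swap, mul_sum]
  refine sum_congr rfl fun p hp ↦ ?_
  rw [HasAntidiagonal.mem_antidiagonal] at hp
  have sign : (-1 : ℝ) ^ (m + 1 + 1) * (-1) ^ p.1 = (-1) ^ p.2 := by
    rw [← hp, ← pow_add, show p.1 + p.2 + 1 + 1 + p.1 = p.2 + 2 * (p.1 + 1) by omega, pow_add,
      pow_mul, neg_one_sq, one_pow, mul_one]
  dsimp only [Prod.fst_swap, Prod.snd_swap]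
  rw [if_pos (show p.1 < m + 1 by omega), ← sign]
  ring

noncomputable def esymmSeries {n : ℕ} (μ : Fin n → ℝ) : ℝ⟦X⟧ :=
  mk fun k ↦ esymm k μ

noncomputable def signedPowerSumSeries {n : ℕ} (μ : Fin n → ℝ) : ℝ⟦X⟧ :=
  mk fun i ↦ (-1) ^ i * ∑ x, μ x ^ (i + 1)

noncomputable def esymmInfSeries {n : ℕ} (μ0 : ℝ) (μ : Fin n → ℝ) : ℝ⟦X⟧ :=
  rescale μ0 (exp ℝ) * esymmSeries μ

theorem signedPowerSumSeries_mul_esymmSeries {n : ℕ} (μ : Fin n → ℝ) :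
    signedPowerSumSeries μ * esymmSeries μ = d⁄dX ℝ (esymmSeries μ) := by
  ext m
  rw [coeff_mul, coeff_derivative]
  simp only [signedPowerSumSeries, esymmSeries, coeff_mk]
  rw [sum_antidiagonal_neg_one_pow_mul_sum_pow_mul_esymm, mul_comm]

theorem coeff_esymmInfSeries {n : ℕ} (k : ℕ) (μ0 : ℝ) (μ : Fin n → ℝ) :
    coeff k (esymmInfSeries μ0 μ) = esymmInf k μ0 μ := by
  rw [esymmInfSeries, coeff_mul, Nat.sum_antidiagonal_eq_sum_range_succ_mk, esymmInf]
  simp [esymmSeries, coeff_rescale, coeff_exp, div_eq_mul_inv]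

theorem derivative_esymmInfSeries {n : ℕ} (μ0 : ℝ) (μ : Fin n → ℝ) :
    d⁄dX ℝ (esymmInfSeries μ0 μ) = (C μ0 + signedPowerSumSeries μ) * esymmInfSeries μ0 μ := by
  rw [esymmInfSeries, Derivation.leibniz, derivative_rescale, derivative_exp,
    ← signedPowerSumSeries_mul_esymmSeries, smul_eq_mul, smul_eq_mul]
  ring

theorem sum_antidiagonal_neg_one_pow_mul_sum_pow_mul_esymmInf {n : ℕ} (k : ℕ) (μ0 : ℝ)
    (μ : Fin n → ℝ) :
    ∑ p ∈ antidiagonal k, (-1) ^ p.1 * (∑ x, μ x ^ (p.1 + 1)) * esymmInf p.2 μ0 μ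
      = (k + 1) * esymmInf (k + 1) μ0 μ - μ0 * esymmInf k μ0 μ := by
  have h := congrArg (coeff k) (derivative_esymmInfSeries μ0 μ)
  rw [coeff_derivative, add_mul, map_add, coeff_C_mul, coeff_mul] at h
  simp only [coeff_esymmInfSeries, signedPowerSumSeries, coeff_mk] at h
  linarith

theorem Matrix.IsHermitian.trace_pow {𝕜 m : Type*} [RCLike 𝕜] [Fintype m] [DecidableEq m]
    {A : Matrix m m 𝕜} (hA : A.IsHermitian) (r : ℕ) :
    (A ^ r).trace = ∑ i, (hA.eigenvalues i : 𝕜) ^ r := by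
  conv_lhs => rw [hA.spectral_theorem, ← map_pow, Unitary.conjStarAlgAut_apply, trace_mul_cycle,
    Unitary.coe_star_mul_self, one_mul, diagonal_pow, trace_diagonal]
  rfl

theorem newtonInf_eq_sum {n : ℕ} (μ0 : ℝ) (μ : Fin n → ℝ) (A : Matrix (Fin n) (Fin n) ℝ) (k : ℕ) :
    newtonInf μ0 μ A k = ∑ p ∈ antidiagonal k, ((-1) ^ p.1 * esymmInf p.2 μ0 μ) • A ^ p.1 := by
  induction k with
  | zero => simp [newtonInf, esymmInf, esymm]
  | succ k ih =>
    rw [newtonInf, ih, Nat.sum_antidiagonal_succ, mul_sum, sub_eq_add_neg, ← sum_neg_distrib]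
    simp only [pow_zero, one_mul, pow_succ', mul_smul_comm, neg_mul, neg_smul]

/-- `trace(A ∘ T_k^∞(μ₀,A)) = (k+1) σ_{k+1}^∞(μ₀,μ) − μ₀ σ_k^∞(μ₀,μ)` for a symmetric matrix `A`
with eigenvalues `μ`. -/
theorem trace_mul_newtonInf {n : ℕ} (k : ℕ) (μ0 : ℝ) {A : Matrix (Fin n) (Fin n) ℝ}
    (hA : A.IsHermitian) :
    (A * newtonInf μ0 hA.eigenvalues A k).trace =
      (k + 1 : ℝ) * esymmInf (k + 1) μ0 hA.eigenvalues - μ0 * esymmInf k μ0 hA.eigenvalues := by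
  rw [← sum_antidiagonal_neg_one_pow_mul_sum_pow_mul_esymmInf, newtonInf_eq_sum, mul_sum,
    trace_sum]
  refine sum_congr rfl fun p _ ↦ ?_
  rw [mul_smul_comm, ← pow_succ', trace_smul, hA.trace_pow, smul_eq_mul]
  simp only [RCLike.ofReal_real_eq_id, id]
  ring
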